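/- Let ρ be a positive integer, r an integer, and set s = ρ+r. In ℚ[[v]] let u be the unique power series with constant term 1 satisfying u^{ρ²} = (1+v)^{r²−ρ²}, and set w(v) = v·u. In ℚ[[t]] set v(t) = t·(1−(r/ρ)t)^{−1}, a = 1+(1−s/ρ)t, b = 1+(2−s/ρ)t, and c = 1+(1−s/ρ)(2−s/ρ)t. Let F ∈ ℚ[[w]] be the unique power series with F(w(v)) = (1+v)^{r²}·(1+(r²/ρ²)v)^{−ρ²} in ℚ[[v]]. Then F(w(v(t))) = a^{ρ²−r²}·b^{r²}·c^{−ρ²} as elements of ℚ[[t]]. -/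

import Mathlib

/-!
Substitution is associative, so `F(w(v(t))) = (F ∘ w)(v(t))` and only the explicit series
`(1 + v)^{r²} (1 + (r/ρ)² v)^{-ρ²}` has to be evaluated at `v = v(t)`. With `σ = 1 - s/ρ = -r/ρ`
one has `a = 1 + σt` and `v(t) = t/a`, hence `1 + v(t) = (a + t)/a = b/a` and
`1 + σ² v(t) = (a + σ²t)/a = c/a`; the two powers of `a` combine to `a^{ρ² - r²}`.
Associativity and multiplicativity of `comp` come from identifying it with `PowerSeries.subst`.
-/

open PowerSeries

/-- Composition (substitution) `f(g)` of formal power series, correct whenever the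
constant term of `g` vanishes. -/
noncomputable def comp (f g : ℚ⟦X⟧) : ℚ⟦X⟧ :=
  PowerSeries.mk fun n => ∑ k ∈ Finset.range (n + 1), coeff k f * coeff n (g ^ k)

/-- Integer power of a formal power series (using the formal inverse for negative
exponents). -/
noncomputable def zp (f : ℚ⟦X⟧) (n : ℤ) : ℚ⟦X⟧ :=
  f ^ n.toNat * f⁻¹ ^ (-n).toNat

theorem PowerSeries.coeff_pow_eq_zero_of_lt {R : Type*} [CommSemiring R] {g : R⟦X⟧}
    (hg : constantCoeff g = 0) {n d : ℕ} (h : n < d) : coeff n (g ^ d) = 0 :=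
  coeff_of_lt_order n <|
    (Nat.cast_lt.mpr h).trans_le (le_order_pow_of_constantCoeff_eq_zero d hg)

theorem PowerSeries.val_inv_units {k : Type*} [Field k] (u : k⟦X⟧ˣ) :
    ((u⁻¹ : k⟦X⟧ˣ) : k⟦X⟧) = (u : k⟦X⟧)⁻¹ :=
  Units.inv_eq_of_mul_eq_one_right <|
    PowerSeries.mul_inv_cancel _ (isUnit_iff_constantCoeff.mp u.isUnit).ne_zero

theorem PowerSeries.subst_X_mul_inv {k : Type*} [Field k] {a : k⟦X⟧}
    (ha : constantCoeff a ≠ 0) (c : k) :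
    (1 + C c * X).subst (X * a⁻¹) = (a + C c * X) * a⁻¹ := by
  have hsubst : HasSubst (X * a⁻¹) := HasSubst.of_constantCoeff_zero' (by simp)
  have hC : substAlgHom hsubst (C c) = C c := (substAlgHom hsubst).commutes c
  rw [← coe_substAlgHom hsubst, map_add, map_one, map_mul, hC, substAlgHom_X, add_mul,
    PowerSeries.mul_inv_cancel a ha, mul_assoc]

theorem comp_eq_subst (f : ℚ⟦X⟧) {g : ℚ⟦X⟧} (hg : constantCoeff g = 0) :
    comp f g = f.subst g := by
  ext n
  rw [coeff_subst' (HasSubst.of_constantCoeff_zero' hg),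
    finsum_eq_sum_of_support_subset (s := Finset.range (n + 1))]
  · simp [comp]
  · intro d hd
    contrapose! hd
    simp_all [coeff_pow_eq_zero_of_lt hg]

theorem constantCoeff_comp (f g : ℚ⟦X⟧) : constantCoeff (comp f g) = constantCoeff f := by
  simp [← coeff_zero_eq_constantCoeff, comp]

theorem comp_assoc (f : ℚ⟦X⟧) {g h : ℚ⟦X⟧} (hg : constantCoeff g = 0)
    (hh : constantCoeff h = 0) : comp f (comp g h) = comp (comp f g) h := by
  have hgh : constantCoeff (comp g h) = 0 := by rw [constantCoeff_comp, hg]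
  rw [comp_eq_subst _ hgh, comp_eq_subst _ hh, comp_eq_subst _ hh, comp_eq_subst _ hg,
    subst_comp_subst_apply (HasSubst.of_constantCoeff_zero' hg)
      (HasSubst.of_constantCoeff_zero' hh)]

theorem zp_val (u : ℚ⟦X⟧ˣ) (n : ℤ) : zp u n = ↑(u ^ n) := by
  cases n with
  | ofNat k => simp [zp]
  | negSucc k => simp [zp, ← val_inv_units, zpow_negSucc]

theorem zp_add {f : ℚ⟦X⟧} (hf : IsUnit f) (m n : ℤ) : zp f (m + n) = zp f m * zp f n := by
  obtain ⟨u, rfl⟩ := hf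
  simp only [zp_val, zpow_add, Units.val_mul]

theorem zp_mul_inv {f g : ℚ⟦X⟧} (hf : IsUnit f) (hg : IsUnit g) (n : ℤ) :
    zp (f * g⁻¹) n = zp f n * zp g (-n) := by
  obtain ⟨u, rfl⟩ := hf
  obtain ⟨v, rfl⟩ := hg
  rw [← val_inv_units, ← Units.val_mul, zp_val, zp_val, zp_val, mul_zpow, inv_zpow',
    Units.val_mul]

theorem map_zp (φ : ℚ⟦X⟧ →+* ℚ⟦X⟧) {f : ℚ⟦X⟧} (hf : IsUnit f) (n : ℤ) :
    φ (zp f n) = zp (φ f) n := by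
  obtain ⟨u, rfl⟩ := hf
  have hφu : φ u = ↑(Units.map φ.toMonoidHom u) := rfl
  rw [hφu, zp_val, zp_val, ← map_zpow]
  rfl

theorem subst_zp {f g : ℚ⟦X⟧} (hf : constantCoeff f ≠ 0) (hg : constantCoeff g = 0) (n : ℤ) :
    (zp f n).subst g = zp (f.subst g) n := by
  rw [← coe_substAlgHom (HasSubst.of_constantCoeff_zero' hg)]
  exact map_zp (substAlgHom _).toRingHom (isUnit_iff_constantCoeff.mpr hf.isUnit) n

theorem virtual_segre_verlinde_f_general (ρ : ℕ) (hρ : 0 < ρ) (r s : ℤ) (hs : s = ρ + r)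
    (u vt a b c : ℚ⟦X⟧)
    (hvt : vt = X * (1 - C ((r : ℚ) / (ρ : ℚ)) * X)⁻¹)
    (ha : a = 1 + C (1 - (s : ℚ) / (ρ : ℚ)) * X)
    (hb : b = 1 + C (2 - (s : ℚ) / (ρ : ℚ)) * X)
    (hc : c = 1 + C ((1 - (s : ℚ) / (ρ : ℚ)) * (2 - (s : ℚ) / (ρ : ℚ))) * X)
    (F : ℚ⟦X⟧)
    (hF : comp F (X * u) =
      zp (1 + X) (r ^ 2) * zp (1 + C ((r : ℚ) ^ 2 / (ρ : ℚ) ^ 2) * X) (-(ρ : ℤ) ^ 2)) :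
    comp F (comp (X * u) vt) =
      zp a ((ρ : ℤ) ^ 2 - r ^ 2) * zp b (r ^ 2) * zp c (-(ρ : ℤ) ^ 2) := by
  set σ : ℚ := 1 - (s : ℚ) / ρ
  have hrσ : (r : ℚ) / ρ = -σ := by
    simp only [σ, hs]; push_cast; field_simp; ring
  have hvt' : vt = X * a⁻¹ := by rw [hvt, ha, hrσ, map_neg, neg_mul, sub_neg_eq_add]
  have hb' : b = a + X := by
    rw [hb, ha, show 2 - (s : ℚ) / ρ = σ + 1 by ring, map_add, map_one]; ring
  have hc' : c = a + C (σ ^ 2) * X := by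
    rw [hc, ha, show σ * (2 - (s : ℚ) / ρ) = σ + σ ^ 2 by ring, map_add]; ring
  have ha0 : constantCoeff a ≠ 0 := by simp [ha]
  have hvt0 : constantCoeff vt = 0 := by simp [hvt']
  calc comp F (comp (X * u) vt)
      = (zp (1 + X) (r ^ 2) * zp (1 + C (σ ^ 2) * X) (-(ρ : ℤ) ^ 2)).subst vt := by
        rw [comp_assoc _ (by simp) hvt0, hF, ← div_pow, hrσ, neg_sq, comp_eq_subst _ hvt0]
    _ = zp (b * a⁻¹) (r ^ 2) * zp (c * a⁻¹) (-(ρ : ℤ) ^ 2) := by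
        rw [subst_mul (HasSubst.of_constantCoeff_zero' hvt0), subst_zp (by simp) hvt0,
          subst_zp (by simp) hvt0, hvt', show (1 + X : ℚ⟦X⟧) = 1 + C 1 * X by simp,
          subst_X_mul_inv ha0, subst_X_mul_inv ha0, map_one, one_mul, hb', hc']
    _ = zp a ((ρ : ℤ) ^ 2 - r ^ 2) * zp b (r ^ 2) * zp c (-(ρ : ℤ) ^ 2) := by
        have hA : IsUnit a := isUnit_iff_constantCoeff.mpr ha0.isUnit
        have hB : IsUnit b := isUnit_iff_constantCoeff.mpr (by simp [hb])
        have hC : IsUnit c := isUnit_iff_constantCoeff.mpr (by simp [hc])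
        rw [zp_mul_inv hB hA, zp_mul_inv hC hA, neg_neg, sub_eq_neg_add, zp_add hA]
        ring

/-- Rank-ρ virtual Segre–Verlinde correspondence for `F = f_{r/ρ}^{ρ²}`:
`F(w(v(t))) = a^{ρ²-r²}·b^{r²}·c^{-ρ²}` with `a = 1+(1-s/ρ)t`, `b = 1+(2-s/ρ)t`,
`c = 1+(1-s/ρ)(2-s/ρ)t`, under the variable changes `w = v(1+v)^{r²/ρ²-1}`,
`v = t(1-(r/ρ)t)⁻¹`, `s = ρ+r`. -/
theorem virtual_segre_verlinde_f (ρ : ℕ) (hρ : 0 < ρ) (r s : ℤ) (hs : s = ρ + r)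
    (u vt a b c : ℚ⟦X⟧)
    (hu0 : constantCoeff u = 1)
    (hu : u ^ (ρ ^ 2) = zp (1 + X) (r ^ 2 - (ρ : ℤ) ^ 2))
    (hvt : vt = X * (1 - C ((r : ℚ) / (ρ : ℚ)) * X)⁻¹)
    (ha : a = 1 + C (1 - (s : ℚ) / (ρ : ℚ)) * X)
    (hb : b = 1 + C (2 - (s : ℚ) / (ρ : ℚ)) * X)
    (hc : c = 1 + C ((1 - (s : ℚ) / (ρ : ℚ)) * (2 - (s : ℚ) / (ρ : ℚ))) * X)
    (F : ℚ⟦X⟧)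
    (hF : comp F (X * u) =
      zp (1 + X) (r ^ 2) * zp (1 + C ((r : ℚ) ^ 2 / (ρ : ℚ) ^ 2) * X) (-(ρ : ℤ) ^ 2)) :
    comp F (comp (X * u) vt) =
      zp a ((ρ : ℤ) ^ 2 - r ^ 2) * zp b (r ^ 2) * zp c (-(ρ : ℤ) ^ 2) :=
  virtual_segre_verlinde_f_general ρ hρ r s hs u vt a b c hvt ha hb hc F hF
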